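/- arXiv:2511.09565 — 3 statements merged into one kernel-verified Lean document; each statement's English description precedes it below -/
import Mathlib

section
/- Let m be a positive integer and let ζ be a primitive m-th root of unity in ℂ. Let a, b be nonzero complex numbers with |ab| < 1. Then f(ζa, ζb) = ∑_{k=0}^{m-1} ζ^{k²} · a^{k(k+1)/2} · b^{k(k-1)/2} · f(A_m·(ab)^{mk}, B_m·(ab)^{-mk}), where A_m = a^{m(m+1)/2}·b^{m(m-1)/2} and B_m = a^{m(m-1)/2}·b^{m(m+1)/2}, and the negative powers (ab)^{-mk} are interpreted as integer powers of the nonzero complex number ab. -/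
/-- Ramanujan's theta function `f(a,b) = ∑_{n ∈ ℤ} a^(n(n+1)/2) * b^(n(n-1)/2)`. -/
noncomputable def ramanujanTheta (a b : ℂ) : ℂ :=
  ∑' n : ℤ, a ^ (n * (n + 1) / 2) * b ^ (n * (n - 1) / 2)

/-! Since `n(n+1)/2 = n(n-1)/2 + n`, the `n`-th term of `f(a,b)` is `a^n (ab)^(n(n-1)/2)`. Scaling
`a` and `b` by `ζ` multiplies it by `ζ^(n²)`, which only depends on `n mod m`. Splitting `ℤ` into
the classes `n = qm + k`, the term of index `qm + k` factors as the `k`-th term times the `q`-th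
term of `f(A_m (ab)^(mk), B_m (ab)^(-mk))`, because `A_m B_m = (ab)^(m²)`. -/

open Filter Topology

lemma tsum_int_eq_sum_range_tsum_mul_add {R : Type*} [AddCommGroup R] [UniformSpace R]
    [IsUniformAddGroup R] [CompleteSpace R] [T0Space R] {f : ℤ → R} (hf : Summable f)
    (m : ℕ) [NeZero m] :
    ∑' n, f n = ∑ k ∈ Finset.range m, ∑' q : ℤ, f (q * m + k) := by
  let e : Fin m × ℤ ≃ ℤ := (Equiv.prodComm _ _).trans (Int.divModEquiv m).symm
  rw [← e.tsum_eq f, ← Fin.sum_univ_eq_sum_range (fun k => ∑' q : ℤ, f (q * m + k)),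
    ← tsum_fintype (L := .unconditional _)]
  have hfe : Summable (f ∘ e) := hf.comp_injective e.injective
  exact hfe.tsum_prod

lemma two_mul_mul_sub_one_ediv_two (n : ℤ) : 2 * (n * (n - 1) / 2) = n * (n - 1) :=
  Int.two_mul_ediv_two_of_even n.even_mul_pred_self

lemma mul_add_one_ediv_two (n : ℤ) : n * (n + 1) / 2 = n * (n - 1) / 2 + n := by
  rw [show n * (n + 1) = n * (n - 1) + n * 2 by ring, Int.add_mul_ediv_right _ _ two_ne_zero]

lemma mul_add_one_ediv_two_add_mul_sub_one_ediv_two (n : ℤ) :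
    n * (n + 1) / 2 + n * (n - 1) / 2 = n ^ 2 := by
  rw [mul_add_one_ediv_two]
  linear_combination two_mul_mul_sub_one_ediv_two n

lemma mul_add_mul_sub_one_ediv_two (m k q : ℤ) :
    (q * m + k) * (q * m + k - 1) / 2 =
      k * (k - 1) / 2 + (m * (m - 1) / 2 + m * k) * q + m ^ 2 * (q * (q - 1) / 2) := by
  have h := two_mul_mul_sub_one_ediv_two
  apply mul_left_cancel₀ (two_ne_zero (α := ℤ))
  linear_combination h (q * m + k) - h k - q * h m - m ^ 2 * h q

section Field

variable {K : Type*} [Field K] {a b : K}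

def thetaTerm (a b : K) (n : ℤ) : K := a ^ (n * (n + 1) / 2) * b ^ (n * (n - 1) / 2)

lemma ramanujanTheta_eq_tsum_thetaTerm (a b : ℂ) :
    ramanujanTheta a b = ∑' n, thetaTerm a b n := rfl

lemma thetaTerm_neg (a b : K) (n : ℤ) : thetaTerm a b (-n) = thetaTerm b a n := by
  rw [thetaTerm, thetaTerm, show -n * (-n + 1) = n * (n - 1) by ring,
    show -n * (-n - 1) = n * (n + 1) by ring, mul_comm]

lemma thetaTerm_natCast (a b : K) (n : ℕ) :
    thetaTerm a b n = a ^ (n * (n + 1) / 2) * b ^ (n * (n - 1) / 2) := by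
  rcases n with _ | n
  · simp [thetaTerm]
  · rw [thetaTerm, ← zpow_natCast, ← zpow_natCast b]
    push_cast [Int.natCast_ediv]
    simp

lemma thetaTerm_eq_zpow_mul (ha : a ≠ 0) (b : K) (n : ℤ) :
    thetaTerm a b n = a ^ n * (a * b) ^ (n * (n - 1) / 2) := by
  rw [thetaTerm, mul_add_one_ediv_two, zpow_add₀ ha, mul_zpow]
  ring

lemma thetaTerm_add_one (ha : a ≠ 0) (hb : b ≠ 0) (n : ℤ) :
    thetaTerm a b (n + 1) = a * (a * b) ^ n * thetaTerm a b n := by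
  rw [thetaTerm_eq_zpow_mul ha, thetaTerm_eq_zpow_mul ha, add_sub_cancel_right, mul_comm (n + 1),
    mul_add_one_ediv_two, zpow_add₀ (mul_ne_zero ha hb), zpow_add_one₀ ha]
  ring

lemma thetaTerm_mul_mul {ζ : K} (hζ : ζ ≠ 0) (a b : K) (n : ℤ) :
    thetaTerm (ζ * a) (ζ * b) n = ζ ^ (n ^ 2) * thetaTerm a b n := by
  rw [thetaTerm, thetaTerm, ← mul_add_one_ediv_two_add_mul_sub_one_ediv_two, zpow_add₀ hζ,
    mul_zpow, mul_zpow]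
  ring

lemma thetaTerm_mul_thetaTerm_swap (ha : a ≠ 0) (hb : b ≠ 0) (n : ℤ) :
    thetaTerm a b n * thetaTerm b a n = (a * b) ^ (n ^ 2) := by
  rw [thetaTerm, thetaTerm, ← mul_add_one_ediv_two_add_mul_sub_one_ediv_two,
    zpow_add₀ (mul_ne_zero ha hb), mul_zpow, mul_zpow]
  ring

lemma thetaTerm_mul_add (ha : a ≠ 0) (hb : b ≠ 0) (m k q : ℤ) :
    thetaTerm a b (q * m + k) =
      thetaTerm a b k *
        thetaTerm (thetaTerm a b m * (a * b) ^ (m * k))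
          (thetaTerm b a m * (a * b) ^ (-(m * k))) q := by
  have hab : a * b ≠ 0 := mul_ne_zero ha hb
  have hA : thetaTerm a b m * (a * b) ^ (m * k) = a ^ m * (a * b) ^ (m * (m - 1) / 2 + m * k) := by
    rw [thetaTerm_eq_zpow_mul ha, zpow_add₀ hab]
    ring
  have hAB : thetaTerm a b m * (a * b) ^ (m * k) * (thetaTerm b a m * (a * b) ^ (-(m * k))) =
      (a * b) ^ (m ^ 2) := by
    rw [mul_mul_mul_comm, thetaTerm_mul_thetaTerm_swap ha hb, ← zpow_add₀ hab, add_neg_cancel,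
      zpow_zero, mul_one]
  have hA0 : thetaTerm a b m * (a * b) ^ (m * k) ≠ 0 := by
    rw [hA]
    exact mul_ne_zero (zpow_ne_zero _ ha) (zpow_ne_zero _ hab)
  rw [thetaTerm_eq_zpow_mul hA0, hAB, hA,
    thetaTerm_eq_zpow_mul ha, thetaTerm_eq_zpow_mul ha, mul_add_mul_sub_one_ediv_two,
    mul_zpow (a ^ m), ← zpow_mul, ← zpow_mul, ← zpow_mul, mul_comm m q, zpow_add₀ ha,
    zpow_add₀ hab, zpow_add₀ hab]
  ring

lemma zpow_sq_mul_add {ζ : K} {m : ℕ} (hζ : ζ ^ m = 1) (hζ0 : ζ ≠ 0) (q k : ℤ) :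
    ζ ^ ((q * m + k) ^ 2) = ζ ^ (k ^ 2) := by
  rw [show (q * m + k) ^ 2 = k ^ 2 + m * (q * (q * m + 2 * k)) by ring, zpow_add₀ hζ0, zpow_mul,
    zpow_natCast, hζ, one_zpow, mul_one]

end Field

section Normed

variable {K : Type*} [NormedField K] [CompleteSpace K] {a b : K}

lemma summable_thetaTerm_natCast (ha : a ≠ 0) (hb : b ≠ 0) (hab : ‖a * b‖ < 1) :
    Summable (fun n : ℕ => thetaTerm a b n) := by
  refine summable_of_ratio_norm_eventually_le (r := 1 / 2) (by norm_num) ?_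
  have h0 : Tendsto (fun n : ℕ => ‖a‖ * ‖a * b‖ ^ n) atTop (𝓝 0) := by
    simpa using (tendsto_pow_atTop_nhds_zero_of_lt_one (norm_nonneg _) hab).const_mul ‖a‖
  filter_upwards [h0.eventually_lt_const (by norm_num : (0 : ℝ) < 1 / 2)] with n hn
  rw [Nat.cast_succ, thetaTerm_add_one ha hb, norm_mul, norm_mul, norm_zpow, zpow_natCast]
  exact mul_le_mul_of_nonneg_right hn.le (norm_nonneg _)

lemma summable_thetaTerm (ha : a ≠ 0) (hb : b ≠ 0) (hab : ‖a * b‖ < 1) :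
    Summable (thetaTerm a b) := by
  refine (summable_thetaTerm_natCast ha hb hab).of_nat_of_neg ?_
  simpa only [thetaTerm_neg] using summable_thetaTerm_natCast hb ha (by rwa [mul_comm])

end Normed

theorem theta_root_of_unity_transform (m : ℕ) (hm : 0 < m) (ζ a b : ℂ)
    (hζ : IsPrimitiveRoot ζ m) (ha : a ≠ 0) (hb : b ≠ 0)
    (hab : ‖a * b‖ < 1) :
    ramanujanTheta (ζ * a) (ζ * b) =
      ∑ k ∈ Finset.range m,
        ζ ^ (k ^ 2) * a ^ (k * (k + 1) / 2) * b ^ (k * (k - 1) / 2) *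
          ramanujanTheta
            (a ^ (m * (m + 1) / 2) * b ^ (m * (m - 1) / 2) * (a * b) ^ (m * k))
            (a ^ (m * (m - 1) / 2) * b ^ (m * (m + 1) / 2) * (a * b) ^ (-(m * k : ℤ))) := by
  have : NeZero m := ⟨hm.ne'⟩
  have hζ0 : ζ ≠ 0 := hζ.ne_zero hm.ne'
  have hζab : ‖ζ * a * (ζ * b)‖ < 1 := by
    rwa [mul_mul_mul_comm, norm_mul, norm_mul, hζ.norm'_eq_one hm.ne', one_mul, one_mul]
  have hS := summable_thetaTerm (mul_ne_zero hζ0 ha) (mul_ne_zero hζ0 hb) hζab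
  rw [ramanujanTheta_eq_tsum_thetaTerm (ζ * a), tsum_int_eq_sum_range_tsum_mul_add hS m]
  refine Finset.sum_congr rfl fun k _ => ?_
  simp only [thetaTerm_mul_mul hζ0, zpow_sq_mul_add hζ.pow_eq_one hζ0, thetaTerm_mul_add ha hb]
  rw [tsum_mul_left, tsum_mul_left, ← ramanujanTheta_eq_tsum_thetaTerm, ← Nat.cast_pow,
    ← Nat.cast_mul, zpow_natCast, zpow_natCast, thetaTerm_natCast, thetaTerm_natCast,
    thetaTerm_natCast, mul_comm (b ^ _) (a ^ _)]
  ring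
end

section
/- Let m be a positive integer and let a, b be nonzero complex numbers with |ab| < 1. Then f(a, b) admits the m-dissection f(a,b) = ∑_{k=0}^{m-1} a^{k(k+1)/2} · b^{k(k-1)/2} · f(A_m·(ab)^{mk}, B_m·(ab)^{-mk}), where A_m = a^{m(m+1)/2}·b^{m(m-1)/2} and B_m = a^{m(m-1)/2}·b^{m(m+1)/2}. -/
open Complex
open scoped Real

section HalfProducts

variable {K : Type*} [DivisionRing K] [CharZero K]

theorem Int.cast_mul_add_one_div_two (n : ℤ) :
    ((n * (n + 1) / 2 : ℤ) : K) = n * (n + 1) / 2 := by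
  rw [Int.cast_div_charZero (Int.even_mul_succ_self n).two_dvd]
  push_cast
  rfl

theorem Int.cast_mul_sub_one_div_two (n : ℤ) :
    ((n * (n - 1) / 2 : ℤ) : K) = n * (n - 1) / 2 := by
  rw [Int.cast_div_charZero (Int.even_mul_pred_self n).two_dvd]
  push_cast
  rfl

theorem Nat.cast_mul_add_one_div_two (n : ℕ) :
    ((n * (n + 1) / 2 : ℕ) : K) = n * (n + 1) / 2 := by
  rw [Nat.cast_div_charZero (Nat.even_mul_succ_self n).two_dvd]
  push_cast
  rfl

theorem Nat.cast_mul_sub_one_div_two (n : ℕ) :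
    ((n * (n - 1) / 2 : ℕ) : K) = n * (n - 1) / 2 := by
  rcases n with _ | n
  · simp
  · rw [Nat.cast_div_charZero (Nat.even_mul_pred_self _).two_dvd]
    push_cast
    simp

end HalfProducts

theorem Int.tsum_eq_sum_range_tsum_mul_add {R : Type*} [AddCommGroup R] [UniformSpace R]
    [IsUniformAddGroup R] [CompleteSpace R] [T0Space R] {f : ℤ → R} (hf : Summable f)
    (m : ℕ) [NeZero m] :
    ∑' n, f n = ∑ k ∈ Finset.range m, ∑' j : ℤ, f (j * m + k) := by
  let e : Fin m × ℤ ≃ ℤ := (Equiv.prodComm (Fin m) ℤ).trans (Int.divModEquiv m).symm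
  have hfe : Summable fun p => f (e p) := e.summable_iff.mpr hf
  rw [← e.tsum_eq, hfe.tsum_prod, tsum_fintype,
    ← Fin.sum_univ_eq_sum_range (fun k => ∑' j : ℤ, f (j * m + k))]
  rfl

noncomputable def ramanujanThetaTerm (a b : ℂ) (n : ℤ) : ℂ :=
  a ^ (n * (n + 1) / 2) * b ^ (n * (n - 1) / 2)

theorem ramanujanTheta_eq_tsum (a b : ℂ) :
    ramanujanTheta a b = ∑' n, ramanujanThetaTerm a b n :=
  rfl

theorem ramanujanThetaTerm_exp_exp (α β : ℂ) (n : ℤ) :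
    ramanujanThetaTerm (exp α) (exp β) n = exp (n * (n + 1) / 2 * α + n * (n - 1) / 2 * β) := by
  rw [ramanujanThetaTerm, ← exp_int_mul, ← exp_int_mul, ← exp_add,
    Int.cast_mul_add_one_div_two, Int.cast_mul_sub_one_div_two]

theorem ramanujanThetaTerm_exp_exp_eq_jacobiTheta₂_term (α β : ℂ) (n : ℤ) :
    ramanujanThetaTerm (exp α) (exp β) n =
      jacobiTheta₂_term n ((α - β) / (4 * π * I)) (-(α + β) / (2 * π) * I) := by
  have hπ : (π : ℂ) ≠ 0 := ofReal_ne_zero.mpr Real.pi_ne_zero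
  rw [ramanujanThetaTerm_exp_exp, jacobiTheta₂_term]
  congr 1
  field_simp
  ring_nf
  rw [I_sq]
  ring

theorem summable_ramanujanThetaTerm_exp_exp {α β : ℂ} (h : (α + β).re < 0) :
    Summable (ramanujanThetaTerm (exp α) (exp β)) := by
  refine ((summable_jacobiTheta₂_term_iff _ _).mpr ?_).congr fun n =>
    (ramanujanThetaTerm_exp_exp_eq_jacobiTheta₂_term α β n).symm
  rw [mul_I_im, neg_div, neg_re, neg_pos, ← ofReal_ofNat, ← ofReal_mul, div_ofReal_re]
  exact div_neg_of_neg_of_pos h (by positivity)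

theorem summable_ramanujanThetaTerm {a b : ℂ} (ha : a ≠ 0) (hb : b ≠ 0) (hab : ‖a * b‖ < 1) :
    Summable (ramanujanThetaTerm a b) := by
  rw [← exp_log ha, ← exp_log hb]
  apply summable_ramanujanThetaTerm_exp_exp
  rw [add_re, log_re, log_re, ← Real.log_mul (norm_ne_zero_iff.mpr ha) (norm_ne_zero_iff.mpr hb),
    ← norm_mul]
  exact Real.log_neg (norm_pos_iff.mpr (mul_ne_zero ha hb)) hab

theorem ramanujanThetaTerm_mul_add {a b : ℂ} (ha : a ≠ 0) (hb : b ≠ 0) (m k : ℕ) (j : ℤ) :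
    ramanujanThetaTerm a b (j * m + k) =
      a ^ (k * (k + 1) / 2) * b ^ (k * (k - 1) / 2) *
        ramanujanThetaTerm
          (a ^ (m * (m + 1) / 2) * b ^ (m * (m - 1) / 2) * (a * b) ^ (m * k))
          (a ^ (m * (m - 1) / 2) * b ^ (m * (m + 1) / 2) * (a * b) ^ (-(m * k : ℤ))) j := by
  rw [← exp_log ha, ← exp_log hb]
  simp only [← exp_add, ← exp_nat_mul, ← exp_int_mul, ramanujanThetaTerm_exp_exp]
  congr 1
  simp only [Nat.cast_mul_add_one_div_two, Nat.cast_mul_sub_one_div_two]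
  push_cast
  ring

theorem theta_m_dissection (m : ℕ) (hm : 0 < m) (a b : ℂ)
    (ha : a ≠ 0) (hb : b ≠ 0) (hab : ‖a * b‖ < 1) :
    ramanujanTheta a b =
      ∑ k ∈ Finset.range m,
        a ^ (k * (k + 1) / 2) * b ^ (k * (k - 1) / 2) *
          ramanujanTheta
            (a ^ (m * (m + 1) / 2) * b ^ (m * (m - 1) / 2) * (a * b) ^ (m * k))
            (a ^ (m * (m - 1) / 2) * b ^ (m * (m + 1) / 2) * (a * b) ^ (-(m * k : ℤ))) := by
  have : NeZero m := ⟨hm.ne'⟩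
  rw [ramanujanTheta_eq_tsum,
    Int.tsum_eq_sum_range_tsum_mul_add (summable_ramanujanThetaTerm ha hb hab) m]
  refine Finset.sum_congr rfl fun k _ => ?_
  rw [ramanujanTheta_eq_tsum, ← tsum_mul_left]
  exact tsum_congr fun j => ramanujanThetaTerm_mul_add ha hb m k j
end

section
/- Let q be a nonzero complex number with |q| < 1. Then f(q⁴, q⁴) = (1/2)·[f(q,q) + f(−q,−q)] and q · f(q⁸, 1) = (1/2)·[f(q,q) − f(−q,−q)]. -/
/-!
Both exponents in `f(c, c)` are triangular numbers summing to `n²`, so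
`f(c, c) = ∑_{n ∈ ℤ} c^(n²)`. Splitting this sum into even and odd `n` gives
`f(q, q) = E + O` with `E = ∑ q^((2k)²) = f(q⁴, q⁴)` and `O = ∑ q^((2k+1)²) = q f(q⁸, 1)`,
while replacing `q` by `-q` changes the sign of the odd squares only: `f(-q, -q) = E - O`.
-/

theorem HasSum.int_even_add_odd {M : Type*} [AddCommMonoid M] [TopologicalSpace M]
    [ContinuousAdd M] {f : ℤ → M} {m m' : M} (he : HasSum (fun k ↦ f (2 * k)) m)
    (ho : HasSum (fun k ↦ f (2 * k + 1)) m') : HasSum f (m + m') := by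
  have h2 : Function.Injective (fun k : ℤ ↦ 2 * k) := mul_right_injective₀ two_ne_zero
  have h2' : Function.Injective (fun k : ℤ ↦ 2 * k + 1) := (add_left_injective 1).comp h2
  have he' := h2.hasSum_range_iff.2 he
  have ho' := h2'.hasSum_range_iff.2 ho
  rw [show Set.range (fun k : ℤ ↦ 2 * k) = {n | Even n} by
    ext n; simp [even_iff_exists_two_mul]] at he'
  rw [show Set.range (fun k : ℤ ↦ 2 * k + 1) = {n | Odd n} by ext n; simp [Odd]] at ho'
  exact he'.add_isCompl Int.isCompl_even_odd ho'

theorem summable_pow_natAbs_sq {R : Type*} [NormedRing R] [NormOneClass R] [CompleteSpace R]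
    {c : R} (hc : ‖c‖ < 1) : Summable fun n : ℤ ↦ c ^ (n.natAbs ^ 2) := by
  have hnat : Summable fun n : ℕ ↦ c ^ (n ^ 2) :=
    .of_norm_bounded (summable_geometric_of_lt_one (norm_nonneg c) hc) fun n ↦
      (norm_pow_le c _).trans
        (pow_le_pow_of_le_one (norm_nonneg c) hc.le (Nat.le_self_pow two_ne_zero n))
  exact .of_nat_of_neg (by simpa using hnat) (by simpa using hnat)

theorem neg_pow_natAbs_two_mul_sq {R : Type*} [Monoid R] [HasDistribNeg R] (c : R) (k : ℤ) :
    (-c) ^ ((2 * k).natAbs ^ 2) = c ^ ((2 * k).natAbs ^ 2) :=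
  Even.neg_pow (Nat.even_pow.2 ⟨Int.natAbs_even.2 (even_two_mul k), two_ne_zero⟩) c

theorem neg_pow_natAbs_two_mul_add_one_sq {R : Type*} [Monoid R] [HasDistribNeg R] (c : R)
    (k : ℤ) : (-c) ^ ((2 * k + 1).natAbs ^ 2) = -c ^ ((2 * k + 1).natAbs ^ 2) :=
  Odd.neg_pow (Int.natAbs_odd.2 (odd_two_mul_add_one k)).pow c

theorem Int.mul_add_one_ediv_two_nonneg (n : ℤ) : 0 ≤ n * (n + 1) / 2 := by
  have : 0 ≤ n * (n + 1) := by nlinarith [sq_nonneg (2 * n + 1)]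
  omega

theorem zpow_eq_pow_toNat {M : Type*} [DivInvMonoid M] (a : M) {k : ℤ} (hk : 0 ≤ k) :
    a ^ k = a ^ k.toNat := by
  rw [← zpow_natCast, Int.toNat_of_nonneg hk]

theorem ramanujanTheta_self (c : ℂ) : ramanujanTheta c c = ∑' n : ℤ, c ^ (n.natAbs ^ 2) := by
  refine tsum_congr fun n ↦ ?_
  have h₁ := n.mul_add_one_ediv_two_nonneg
  have h₂ : 0 ≤ n * (n - 1) / 2 := by
    simpa only [sub_add_cancel, mul_comm] using (n - 1).mul_add_one_ediv_two_nonneg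
  rw [zpow_eq_pow_toNat c h₁, zpow_eq_pow_toNat c h₂, ← pow_add]
  congr 1
  obtain ⟨k, hk⟩ := Int.even_mul_succ_self n
  zify
  rw [Int.toNat_of_nonneg h₁, Int.toNat_of_nonneg h₂, sq_abs]
  have : n * (n - 1) = n * (n + 1) - 2 * n := by ring
  have : n ^ 2 = n * (n + 1) - n := by ring
  omega

theorem ramanujanTheta_pow_four_self (q : ℂ) :
    ramanujanTheta (q ^ 4) (q ^ 4) = ∑' k : ℤ, q ^ ((2 * k).natAbs ^ 2) := by
  rw [ramanujanTheta_self]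
  refine tsum_congr fun k ↦ ?_
  rw [← pow_mul, Int.natAbs_mul]
  ring_nf

theorem mul_ramanujanTheta_pow_eight_one (q : ℂ) :
    q * ramanujanTheta (q ^ 8) 1 = ∑' k : ℤ, q ^ ((2 * k + 1).natAbs ^ 2) := by
  rw [ramanujanTheta, ← tsum_mul_left]
  refine tsum_congr fun k ↦ ?_
  have h := k.mul_add_one_ediv_two_nonneg
  rw [one_zpow, mul_one, zpow_eq_pow_toNat _ h, ← pow_mul, ← pow_succ']
  congr 1
  obtain ⟨m, hm⟩ := Int.even_mul_succ_self k
  zify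
  rw [Int.toNat_of_nonneg h, sq_abs]
  have : (2 * k + 1) ^ 2 = 4 * (k * (k + 1)) + 1 := by ring
  omega

theorem theta_even_odd_q_general (q : ℂ) (hq1 : ‖q‖ < 1) :
    ramanujanTheta (q ^ 4) (q ^ 4) =
        (1 / 2) * (ramanujanTheta q q + ramanujanTheta (-q) (-q)) ∧
      q * ramanujanTheta (q ^ 8) 1 =
        (1 / 2) * (ramanujanTheta q q - ramanujanTheta (-q) (-q)) := by
  have hF := summable_pow_natAbs_sq hq1
  have hE : Summable fun k : ℤ ↦ q ^ ((2 * k).natAbs ^ 2) :=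
    hF.comp_injective (mul_right_injective₀ two_ne_zero)
  have hO : Summable fun k : ℤ ↦ q ^ ((2 * k + 1).natAbs ^ 2) :=
    hF.comp_injective ((add_left_injective 1).comp (mul_right_injective₀ two_ne_zero))
  have hplus : ramanujanTheta q q =
      (∑' k : ℤ, q ^ ((2 * k).natAbs ^ 2)) + ∑' k : ℤ, q ^ ((2 * k + 1).natAbs ^ 2) := by
    rw [ramanujanTheta_self]
    refine (HasSum.int_even_add_odd ?_ ?_).tsum_eq
    exacts [hE.hasSum, hO.hasSum]
  have hminus : ramanujanTheta (-q) (-q) =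
      (∑' k : ℤ, q ^ ((2 * k).natAbs ^ 2)) - ∑' k : ℤ, q ^ ((2 * k + 1).natAbs ^ 2) := by
    rw [ramanujanTheta_self, sub_eq_add_neg]
    refine (HasSum.int_even_add_odd ?_ ?_).tsum_eq
    · simpa only [neg_pow_natAbs_two_mul_sq] using hE.hasSum
    · simpa only [neg_pow_natAbs_two_mul_add_one_sq] using hO.hasSum.neg
  rw [ramanujanTheta_pow_four_self, mul_ramanujanTheta_pow_eight_one, hplus, hminus]
  constructor <;> ring

theorem theta_even_odd_q (q : ℂ) (hq : q ≠ 0) (hq1 : ‖q‖ < 1) :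
    ramanujanTheta (q ^ 4) (q ^ 4) =
        (1 / 2) * (ramanujanTheta q q + ramanujanTheta (-q) (-q)) ∧
      q * ramanujanTheta (q ^ 8) 1 =
        (1 / 2) * (ramanujanTheta q q - ramanujanTheta (-q) (-q)) :=
  theta_even_odd_q_general q hq1
end
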